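/- arXiv:1108.1301 — 2 statements merged into one kernel-verified Lean document; each statement's English description precedes it below -/
import Mathlib

section
/- Let G = {g₁^[v₁],…,g_s^[v_s]} be a full-labeled Gröbner basis for I, let c ∈ K be a nonzero constant, x^α e_j a module term, and f ∈ I a polynomial such that there exists u ∈ R^m with lm(u) = c·x^α e_j and f = u·F. Let G_{≺x^α e_j} = {g_i^[v_i] ∈ G : lpp(v_i) ≺ x^α e_j}. Then there exist polynomials p₁,…,p_l ∈ R and elements g'₁^[v'₁],…,g'_l^[v'_l] ∈ G_{≺x^α e_j} such that f = c·x^α·f_j + p₁g'₁ + … + p_l g'_l and x^α e_j ≻ lpp(p_i·v'_i) for i = 1,…,l. Moreover, for such p_i, the vector u' := c·x^α e_j + p₁v'₁ + … + p_l v'_l satisfies lm(u') = c·x^α e_j and f = u'·F. -/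
open MvPolynomial

noncomputable section

/-- Power products of `K[x₁,…,xₙ]`, recorded by their exponent vectors
(so `x^α ∣ x^β` is `α ≤ β` and `x^α · x^β` is `α + β`). -/
abbrev PP (n : ℕ) := Fin n →₀ ℕ

/-- Module terms `x^α • eᵢ` of the free module `R^m`. -/
abbrev MTerm (n m : ℕ) := PP n × Fin m

/-- Multiplication of a module term by a power product. -/
def mtmul {n m : ℕ} (γ : PP n) (t : MTerm n m) : MTerm n m := (γ + t.1, t.2)

/-- A monomial order `≺₁` on the power products of `K[x₁,…,xₙ]`. -/
structure MonOrd (n : ℕ) where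
  ord : LinearOrder (PP n)
  mul_lt : ∀ γ a b : PP n, ord.lt a b → ord.lt (γ + a) (γ + b)
  one_le : ∀ a : PP n, ord.le 0 a
  wf : WellFounded ord.lt

/-- A term order `≺₂` on the module terms of `R^m`: a well-order compatible with
multiplication by power products. -/
structure ModOrd (n m : ℕ) where
  ord : LinearOrder (MTerm n m)
  mul_lt : ∀ (γ : PP n) (a b : MTerm n m), ord.lt a b → ord.lt (mtmul γ a) (mtmul γ b)
  wf : WellFounded ord.lt

variable {K : Type*} [Field K] {n m : ℕ}

/-- Elements of the free module `R^m`. -/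
abbrev ModElem (K : Type*) [Field K] (n m : ℕ) := Fin m → MvPolynomial (Fin n) K

/-- `u · F = u₁f₁ + … + u_m f_m`. -/
def dotF (u : ModElem K n m) (F : Fin m → MvPolynomial (Fin n) K) : MvPolynomial (Fin n) K :=
  ∑ i, u i * F i

/-- Leading power product of a polynomial, valued in `WithBot` so that `lppW 0 = ⊥`
(the convention `lpp 0 = 0 ≺ t` for all terms `t`). -/
def lppW (o : MonOrd n) (f : MvPolynomial (Fin n) K) : WithBot (PP n) :=
  @Finset.max (PP n) o.ord f.support

/-- Leading power product of a (nonzero) polynomial. -/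
def lpp (o : MonOrd n) (f : MvPolynomial (Fin n) K) : PP n :=
  WithBot.unbotD 0 (lppW o f)

/-- Leading coefficient of a polynomial (`lc 0 = 0`). -/
def lc (o : MonOrd n) (f : MvPolynomial (Fin n) K) : K := f.coeff (lpp o f)

/-- The set of module terms occurring in a module element. -/
def msupport (u : ModElem K n m) : Finset (MTerm n m) :=
  Finset.univ.biUnion fun i => (u i).support.image fun α => (α, i)

/-- Leading module term (signature) of a module element, `⊥` for the zero element. -/
def lppMW (o : ModOrd n m) (u : ModElem K n m) : WithBot (MTerm n m) :=
  @Finset.max (MTerm n m) o.ord (msupport u)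

/-- Coefficient of a module element at a module term. -/
def mcoeff (u : ModElem K n m) (t : MTerm n m) : K := (u t.2).coeff t.1

/-- Leading coefficient of a module element (`0` for the zero element). -/
def lcM (o : ModOrd n m) (u : ModElem K n m) : K :=
  WithBot.recBotCoe 0 (fun t => mcoeff u t) (lppMW o u)

/-- `⪯` on `WithBot`-valued leading power products w.r.t. `≺₁`. -/
def wbleP (o : MonOrd n) (a b : WithBot (PP n)) : Prop :=
  @LE.le (WithBot (PP n)) (@WithBot.instLE (PP n) o.ord.toLE) a b
/-- `≺` on `WithBot`-valued leading power products w.r.t. `≺₁`. -/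
def wbltP (o : MonOrd n) (a b : WithBot (PP n)) : Prop :=
  @LT.lt (WithBot (PP n)) (@WithBot.instLT (PP n) o.ord.toLT) a b
/-- `⪯` on `WithBot`-valued signatures w.r.t. `≺₂`. -/
def wbleM (o : ModOrd n m) (a b : WithBot (MTerm n m)) : Prop :=
  @LE.le (WithBot (MTerm n m)) (@WithBot.instLE (MTerm n m) o.ord.toLE) a b
/-- `≺` on `WithBot`-valued signatures w.r.t. `≺₂`. -/
def wbltM (o : ModOrd n m) (a b : WithBot (MTerm n m)) : Prop :=
  @LT.lt (WithBot (MTerm n m)) (@WithBot.instLT (MTerm n m) o.ord.toLT) a b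

/-- Multiplication of a module element by a power product `x^t`. -/
def smulPP (t : PP n) (u : ModElem K n m) : ModElem K n m := fun k => monomial t (1 : K) * u k

/-- Multiplication of a module element by a polynomial. -/
def pmul (p : MvPolynomial (Fin n) K) (u : ModElem K n m) : ModElem K n m := fun k => p * u k

/-- The `j`-th standard basis vector `e_j` of `R^m`. -/
def eVec (j : Fin m) : ModElem K n m := fun k => if k = j then 1 else 0

/-- The module element `c · x^α · e_j`. -/
def termVec (α : PP n) (c : K) (j : Fin m) : ModElem K n m :=
  fun k => if k = j then monomial α c else 0

/-- `G = {g₁^[v₁], …, g_s^[v_s]}` is a full-labeled Gröbner basis for `I = ⟨F⟩`: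
each `gᵢ = vᵢ · F`, and for every labeled polynomial `f^[u]` of `I` with `f ≠ 0`
there is `i` with `lpp(gᵢ) ∣ lpp(f)` and `lpp(t·vᵢ) ⪯ lpp(u)`, `t = lpp(f)/lpp(gᵢ)`. -/
def IsFullLGB (o1 : MonOrd n) (o2 : ModOrd n m) (F : Fin m → MvPolynomial (Fin n) K)
    {s : ℕ} (g : Fin s → MvPolynomial (Fin n) K) (v : Fin s → ModElem K n m) : Prop :=
  (∀ i, g i = dotF (v i) F) ∧
  ∀ (f : MvPolynomial (Fin n) K) (u : ModElem K n m), f = dotF u F → f ≠ 0 →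
    ∃ i, g i ≠ 0 ∧ lpp o1 (g i) ≤ lpp o1 f ∧
      wbleM o2 (lppMW o2 (smulPP (lpp o1 f - lpp o1 (g i)) (v i))) (lppMW o2 u)

/-- `S = {g₁^(t₁), …, g_s^(t_s)}` is a signature-labeled Gröbner basis for `I = ⟨F⟩`. -/
def IsSigLGB (o1 : MonOrd n) (o2 : ModOrd n m) (F : Fin m → MvPolynomial (Fin n) K)
    {s : ℕ} (g : Fin s → MvPolynomial (Fin n) K) (t : Fin s → MTerm n m) : Prop :=
  ∃ v : Fin s → ModElem K n m, (∀ i, lppMW o2 (v i) = (t i : WithBot (MTerm n m))) ∧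
    IsFullLGB o1 o2 F g v

/-- `g^[v]` is a standard form of the module term `T` in `I = ⟨F⟩`. -/
def IsStdForm (o1 : MonOrd n) (o2 : ModOrd n m) (F : Fin m → MvPolynomial (Fin n) K)
    (T : MTerm n m) (g : MvPolynomial (Fin n) K) (v : ModElem K n m) : Prop :=
  g = dotF v F ∧ lppMW o2 v = (T : WithBot (MTerm n m)) ∧
  ∀ (f : MvPolynomial (Fin n) K) (u : ModElem K n m), f = dotF u F →
    lppMW o2 u = (T : WithBot (MTerm n m)) → wbleP o1 (lppW o1 g) (lppW o1 f)

/-- `≺₂` is the position-over-term extension of `≺₁`: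
`x^α eᵢ ≺₂ x^β e_j` iff `i > j`, or `i = j` and `x^α ≺₁ x^β`. -/
def IsPOT (o1 : MonOrd n) (o2 : ModOrd n m) : Prop :=
  ∀ a b : MTerm n m, o2.ord.lt a b ↔ (b.2 < a.2 ∨ (a.2 = b.2 ∧ o1.ord.lt a.1 b.1))

/-- `f^(T)` is an admissible labeled polynomial: some `u` satisfies `f = u·F`, `lpp(u) = T`. -/
def Admissible (o2 : ModOrd n m) (F : Fin m → MvPolynomial (Fin n) K)
    (f : MvPolynomial (Fin n) K) (T : MTerm n m) : Prop :=
  ∃ u : ModElem K n m, f = dotF u F ∧ lppMW o2 u = (T : WithBot (MTerm n m))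

/-- `r` is a strict total order on the set `B` (`r p q` read: `p` was added later than `q`). -/
def StrictTotalOn {X : Type*} (B : Set X) (r : X → X → Prop) : Prop :=
  (∀ p ∈ B, ¬ r p p) ∧
  (∀ p ∈ B, ∀ q ∈ B, ∀ w ∈ B, r p q → r q w → r p w) ∧
  (∀ p ∈ B, ∀ q ∈ B, p ≠ q → r p q ∨ r q p)

/-- `tf o1 f g = lcm(lpp f, lpp g) / lpp f`. -/
def tf (o1 : MonOrd n) (f g : MvPolynomial (Fin n) K) : PP n :=
  (lpp o1 f ⊔ lpp o1 g) - lpp o1 f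

/-- `f^[u]` has a standard representation w.r.t. the set `B` of labeled polynomials. -/
def HasStdRep (o1 : MonOrd n) (o2 : ModOrd n m)
    (B : Set (MvPolynomial (Fin n) K × ModElem K n m))
    (f : MvPolynomial (Fin n) K) (u : ModElem K n m) : Prop :=
  ∃ (s : ℕ) (p : Fin s → MvPolynomial (Fin n) K)
      (q : Fin s → MvPolynomial (Fin n) K × ModElem K n m),
    (∀ i, q i ∈ B) ∧ f = ∑ i, p i * (q i).1 ∧
    (∀ i, wbleP o1 (lppW o1 (p i * (q i).1)) (lppW o1 f)) ∧
    (∀ i, wbleM o2 (lppMW o2 (pmul (p i) ((q i).2))) (lppMW o2 u))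

/-- `(t_p, p, t_q, q)` is a critical pair of labeled polynomials. -/
def IsCritPairL (o1 : MonOrd n) (o2 : ModOrd n m)
    (later : (MvPolynomial (Fin n) K × ModElem K n m) →
      (MvPolynomial (Fin n) K × ModElem K n m) → Prop)
    (p q : MvPolynomial (Fin n) K × ModElem K n m) : Prop :=
  p.1 ≠ 0 ∧ q.1 ≠ 0 ∧
  (wbltM o2 (lppMW o2 (smulPP (tf o1 q.1 p.1) q.2)) (lppMW o2 (smulPP (tf o1 p.1 q.1) p.2)) ∨
   (lppMW o2 (smulPP (tf o1 p.1 q.1) p.2) = lppMW o2 (smulPP (tf o1 q.1 p.1) q.2) ∧ later q p))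

/-- Polynomial part of the S-polynomial of a critical pair of labeled polynomials. -/
def sPolyF (o1 : MonOrd n) (p q : MvPolynomial (Fin n) K × ModElem K n m) :
    MvPolynomial (Fin n) K :=
  monomial (tf o1 p.1 q.1) (1 : K) * p.1 -
    monomial (tf o1 q.1 p.1) (lc o1 p.1 / lc o1 q.1) * q.1

/-- Label part of the S-polynomial of a critical pair of labeled polynomials. -/
def sPolyU (o1 : MonOrd n) (p q : MvPolynomial (Fin n) K × ModElem K n m) : ModElem K n m :=
  fun k => monomial (tf o1 p.1 q.1) (1 : K) * p.2 k -
    monomial (tf o1 q.1 p.1) (lc o1 p.1 / lc o1 q.1) * q.2 k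

/-- `t·p` (labeled version) is F5-divisible by `B`. -/
def F5DivL (o1 : MonOrd n) (o2 : ModOrd n m)
    (B : Set (MvPolynomial (Fin n) K × ModElem K n m)) (t : PP n)
    (p : MvPolynomial (Fin n) K × ModElem K n m) : Prop :=
  ∃ (α : PP n) (i : Fin m), lppMW o2 p.2 = (((α, i) : MTerm n m) : WithBot (MTerm n m)) ∧
    ∃ q ∈ B, q.1 ≠ 0 ∧ ∃ (β : PP n) (j : Fin m),
      lppMW o2 q.2 = (((β, j) : MTerm n m) : WithBot (MTerm n m)) ∧
      lpp o1 q.1 ≤ t + α ∧ o2.ord.lt (((0 : PP n), j) : MTerm n m) (((0 : PP n), i) : MTerm n m)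

/-- `t·p` (labeled version) is F5-rewritable by `B`. -/
def F5RewL (o2 : ModOrd n m)
    (later : (MvPolynomial (Fin n) K × ModElem K n m) →
      (MvPolynomial (Fin n) K × ModElem K n m) → Prop)
    (B : Set (MvPolynomial (Fin n) K × ModElem K n m)) (t : PP n)
    (p : MvPolynomial (Fin n) K × ModElem K n m) : Prop :=
  ∃ q ∈ B, (∃ a b : MTerm n m, lppMW o2 q.2 = (a : WithBot (MTerm n m)) ∧
    lppMW o2 (smulPP t p.2) = (b : WithBot (MTerm n m)) ∧ a.2 = b.2 ∧ a.1 ≤ b.1) ∧ later q p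

/-- A set `G` of labeled polynomials is a full-labeled Gröbner basis for `I = ⟨F⟩`. -/
def IsFullLGBSet (o1 : MonOrd n) (o2 : ModOrd n m) (F : Fin m → MvPolynomial (Fin n) K)
    (G : Set (MvPolynomial (Fin n) K × ModElem K n m)) : Prop :=
  (∀ p ∈ G, p.1 = dotF p.2 F) ∧
  ∀ (f : MvPolynomial (Fin n) K) (u : ModElem K n m), f = dotF u F → f ≠ 0 →
    ∃ p ∈ G, p.1 ≠ 0 ∧ lpp o1 p.1 ≤ lpp o1 f ∧
      wbleM o2 (lppMW o2 (smulPP (lpp o1 f - lpp o1 p.1) p.2)) (lppMW o2 u)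

/-- `t·p` (signature version, `p = f^(x^α eᵢ)`) is F5-divisible by `B`. -/
def F5DivS (o1 : MonOrd n) (o2 : ModOrd n m)
    (B : Set (MvPolynomial (Fin n) K × MTerm n m)) (t : PP n)
    (p : MvPolynomial (Fin n) K × MTerm n m) : Prop :=
  ∃ q ∈ B, q.1 ≠ 0 ∧ lpp o1 q.1 ≤ t + p.2.1 ∧
    o2.ord.lt (((0 : PP n), q.2.2) : MTerm n m) (((0 : PP n), p.2.2) : MTerm n m)

/-- `t·p` (signature version) is F5-rewritable by `B`. -/
def F5RewS
    (later : (MvPolynomial (Fin n) K × MTerm n m) →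
      (MvPolynomial (Fin n) K × MTerm n m) → Prop)
    (B : Set (MvPolynomial (Fin n) K × MTerm n m)) (t : PP n)
    (p : MvPolynomial (Fin n) K × MTerm n m) : Prop :=
  ∃ q ∈ B, q.2.2 = p.2.2 ∧ q.2.1 ≤ t + p.2.1 ∧ later q p

/-- `(t_p, p, t_q, q)` is a critical pair (signature version). -/
def IsCritPairS (o1 : MonOrd n) (o2 : ModOrd n m)
    (later : (MvPolynomial (Fin n) K × MTerm n m) →
      (MvPolynomial (Fin n) K × MTerm n m) → Prop)
    (p q : MvPolynomial (Fin n) K × MTerm n m) : Prop :=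
  p.1 ≠ 0 ∧ q.1 ≠ 0 ∧
  (o2.ord.lt (mtmul (tf o1 q.1 p.1) q.2) (mtmul (tf o1 p.1 q.1) p.2) ∨
   (mtmul (tf o1 p.1 q.1) p.2 = mtmul (tf o1 q.1 p.1) q.2 ∧ later q p))

/-- A finite set `S` of pairs `(g, t)` is a signature-labeled Gröbner basis for `I = ⟨F⟩`. -/
def IsSigLGBSet (o1 : MonOrd n) (o2 : ModOrd n m) (F : Fin m → MvPolynomial (Fin n) K)
    (S : Set (MvPolynomial (Fin n) K × MTerm n m)) : Prop :=
  S.Finite ∧ ∃ V : MvPolynomial (Fin n) K × MTerm n m → ModElem K n m,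
    (∀ p ∈ S, lppMW o2 (V p) = (p.2 : WithBot (MTerm n m))) ∧
    IsFullLGBSet o1 o2 F ((fun p => (p.1, V p)) '' S)

end

section DetachAux
variable {K : Type*} [Field K] {n m : ℕ}

/-! ### order combinators with explicit instances -/

theorem wbleM_trans (o2 : ModOrd n m) {a b c : WithBot (MTerm n m)}
    (h1 : wbleM o2 a b) (h2 : wbleM o2 b c) : wbleM o2 a c :=
  @le_trans _ (@WithBot.instPreorder _ o2.ord.toPreorder) _ _ _ h1 h2

theorem wbltM_of_le_of_lt (o2 : ModOrd n m) {a b c : WithBot (MTerm n m)}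
    (h1 : wbleM o2 a b) (h2 : wbltM o2 b c) : wbltM o2 a c :=
  @lt_of_le_of_lt _ (@WithBot.instPreorder _ o2.ord.toPreorder) _ _ _ h1 h2

theorem wbleM_of_lt (o2 : ModOrd n m) {a b : WithBot (MTerm n m)}
    (h : wbltM o2 a b) : wbleM o2 a b :=
  @le_of_lt _ (@WithBot.instPreorder _ o2.ord.toPreorder) _ _ h

theorem wbM_antisymm (o2 : ModOrd n m) {a b : WithBot (MTerm n m)}
    (h1 : wbleM o2 a b) (h2 : wbleM o2 b a) : a = b :=
  @le_antisymm _ (@WithBot.instPartialOrder _ o2.ord.toPartialOrder) _ _ h1 h2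

theorem wbltM_bot (o2 : ModOrd n m) (t : MTerm n m) :
    wbltM o2 (⊥ : WithBot (MTerm n m)) (t : WithBot (MTerm n m)) :=
  @WithBot.bot_lt_coe _ o2.ord.toLT t

/-! ### mcoeff / msupport / lppMW basics -/

theorem mem_msupport {u : ModElem K n m} {t : MTerm n m} :
    t ∈ msupport u ↔ mcoeff u t ≠ 0 := by
  unfold msupport mcoeff
  simp only [Finset.mem_biUnion, Finset.mem_image, Finset.mem_univ, true_and]
  constructor
  · rintro ⟨i, β, hβ, rfl⟩; simpa [MvPolynomial.mem_support_iff] using hβ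
  · intro h; exact ⟨t.2, t.1, MvPolynomial.mem_support_iff.2 h, rfl⟩

theorem le_lppMW (o2 : ModOrd n m) {u : ModElem K n m} {t : MTerm n m}
    (h : mcoeff u t ≠ 0) : wbleM o2 (t : WithBot (MTerm n m)) (lppMW o2 u) :=
  @Finset.le_max _ o2.ord _ _ (mem_msupport.2 h)

theorem mcoeff_eq_zero_of_lt (o2 : ModOrd n m) {u : ModElem K n m} {t : MTerm n m}
    (h : wbltM o2 (lppMW o2 u) (t : WithBot (MTerm n m))) : mcoeff u t = 0 := by
  by_contra hc
  exact absurd (le_lppMW o2 hc)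
    (@not_le_of_gt (WithBot (MTerm n m)) (@WithBot.instPreorder _ o2.ord.toPreorder) _ _ h)

/-- Upper bound for `lppMW` from coefficientwise bounds. -/
theorem lppMW_le_of (o2 : ModOrd n m) {u : ModElem K n m} {M : WithBot (MTerm n m)}
    (h : ∀ b : MTerm n m, mcoeff u b ≠ 0 → wbleM o2 (b : WithBot (MTerm n m)) M) :
    wbleM o2 (lppMW o2 u) M := by
  cases hM : lppMW o2 u with
  | bot => exact @bot_le _ (@WithBot.instLE _ o2.ord.toLE) (@WithBot.instOrderBot _ o2.ord.toLE) _
  | coe a =>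
    exact h a (mem_msupport.1 (@Finset.mem_of_max _ o2.ord _ _ hM))

theorem lppMW_lt_of (o2 : ModOrd n m) {u : ModElem K n m} {T : MTerm n m}
    (h : ∀ b : MTerm n m, mcoeff u b ≠ 0 → o2.ord.lt b T) :
    wbltM o2 (lppMW o2 u) (T : WithBot (MTerm n m)) := by
  cases hM : lppMW o2 u with
  | bot => exact wbltM_bot o2 T
  | coe a =>
    exact (@WithBot.coe_lt_coe _ _ _ o2.ord.toLT).2
      (h a (mem_msupport.1 (@Finset.mem_of_max _ o2.ord _ _ hM)))

/-- From `lppMW u ≺ T` each coefficient index is `≺ T`. -/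
theorem lt_T_of_mcoeff (o2 : ModOrd n m) {u : ModElem K n m} {T : MTerm n m}
    {b : MTerm n m} (hb : mcoeff u b ≠ 0)
    (h : wbltM o2 (lppMW o2 u) (T : WithBot (MTerm n m))) : o2.ord.lt b T :=
  (@WithBot.coe_lt_coe _ _ _ o2.ord.toLT).1
    (wbltM_of_le_of_lt o2 (le_lppMW o2 hb) h)

theorem le_T_of_mcoeff (o2 : ModOrd n m) {u : ModElem K n m} {T : MTerm n m}
    {b : MTerm n m} (hb : mcoeff u b ≠ 0)
    (h : wbleM o2 (lppMW o2 u) (T : WithBot (MTerm n m))) : o2.ord.le b T :=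
  (@WithBot.coe_le_coe _ _ _ o2.ord.toLE).1
    (wbleM_trans o2 (le_lppMW o2 hb) h)

/-! ### smulPP and the term order -/

theorem mcoeff_smulPP (γ : PP n) (u : ModElem K n m) (b : MTerm n m) :
    mcoeff (smulPP γ u) (mtmul γ b) = mcoeff u b := by
  unfold mcoeff smulPP mtmul
  simpa using MvPolynomial.coeff_monomial_mul b.1 γ (1:K) (u b.2)

theorem mcoeff_smulPP_ne (γ : PP n) (u : ModElem K n m) {b : MTerm n m}
    (h : mcoeff (smulPP γ u) b ≠ 0) :
    ∃ b' : MTerm n m, mcoeff u b' ≠ 0 ∧ b = mtmul γ b' := by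
  unfold mcoeff smulPP at h
  rw [MvPolynomial.coeff_monomial_mul'] at h
  by_cases hle : γ ≤ b.1
  · refine ⟨(b.1 - γ, b.2), ?_, ?_⟩
    · simpa [mcoeff, hle] using h
    · unfold mtmul
      ext1
      · simp [add_tsub_cancel_of_le hle]
      · rfl
  · simp [hle] at h

/-- `b ⪯ γ·b` for any term order (via well-foundedness). -/
theorem le_mtmul (o2 : ModOrd n m) (γ : PP n) (b : MTerm n m) :
    o2.ord.le b (mtmul γ b) := by
  by_contra hc
  have hlt : o2.ord.lt (mtmul γ b) b := @lt_of_not_ge _ o2.ord _ _ hc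
  -- build an infinite descending chain k ↦ (k•γ + b.1, b.2)
  set f : ℕ → MTerm n m := fun k => (k • γ + b.1, b.2) with hf
  have hstep : ∀ k, mtmul γ (f k) = f (k + 1) := by
    intro k
    unfold mtmul
    simp only [hf]
    ext1
    · simp [succ_nsmul, add_comm, add_assoc, add_left_comm]
    · rfl
  have hdesc : ∀ k, o2.ord.lt (f (k + 1)) (f k) := by
    intro k
    induction k with
    | zero => simpa [← hstep 0, hf, mtmul] using hlt
    | succ k ih =>
      have := o2.mul_lt γ _ _ ih
      rwa [hstep, hstep] at this
  obtain ⟨a, ⟨k, hk⟩, hmin⟩ := o2.wf.has_min (Set.range f) ⟨f 0, ⟨0, rfl⟩⟩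
  exact hmin (f (k + 1)) ⟨k + 1, rfl⟩ (hk ▸ hdesc k)


/-- `lppMW u ⪯ lppMW (x^γ • u)`. -/
theorem lppMW_le_smulPP (o2 : ModOrd n m) (γ : PP n) (u : ModElem K n m) :
    wbleM o2 (lppMW o2 u) (lppMW o2 (smulPP γ u)) := by
  refine lppMW_le_of o2 fun b hb => ?_
  have h1 : mcoeff (smulPP γ u) (mtmul γ b) ≠ 0 := by
    rw [mcoeff_smulPP]; exact hb
  refine wbleM_trans o2 ?_ (le_lppMW o2 h1)
  exact (@WithBot.coe_le_coe _ _ _ o2.ord.toLE).2 (le_mtmul o2 γ b)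

/-! ### polynomial-side (o1) lemmas -/

theorem wbleP_trans (o1 : MonOrd n) {a b c : WithBot (PP n)}
    (h1 : wbleP o1 a b) (h2 : wbleP o1 b c) : wbleP o1 a c :=
  @le_trans _ (@WithBot.instPreorder _ o1.ord.toPreorder) _ _ _ h1 h2

theorem le_lppW (o1 : MonOrd n) {h : MvPolynomial (Fin n) K} {γ : PP n}
    (hc : MvPolynomial.coeff γ h ≠ 0) : wbleP o1 (γ : WithBot (PP n)) (lppW o1 h) :=
  @Finset.le_max _ o1.ord _ _ (MvPolynomial.mem_support_iff.2 hc)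

theorem lppW_eq_of_ne (o1 : MonOrd n) {h : MvPolynomial (Fin n) K} (hne : h ≠ 0) :
    lppW o1 h = ((lpp o1 h : PP n) : WithBot (PP n)) ∧ MvPolynomial.coeff (lpp o1 h) h ≠ 0 := by
  obtain ⟨γ, hγ⟩ := @Finset.max_of_nonempty _ o1.ord _ (MvPolynomial.support_nonempty.2 hne)
  have h1 : lppW o1 h = (γ : WithBot (PP n)) := hγ
  have h2 : lpp o1 h = γ := by unfold lpp; rw [h1]; rfl
  refine ⟨by rw [h1, h2], ?_⟩
  rw [h2]
  exact MvPolynomial.mem_support_iff.1 (@Finset.mem_of_max _ o1.ord _ _ hγ)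

theorem lppW_le_of (o1 : MonOrd n) {h : MvPolynomial (Fin n) K} {M : WithBot (PP n)}
    (hb : ∀ γ : PP n, MvPolynomial.coeff γ h ≠ 0 → wbleP o1 (γ : WithBot (PP n)) M) :
    wbleP o1 (lppW o1 h) M := by
  cases hM : lppW o1 h with
  | bot => exact @bot_le _ (@WithBot.instLE _ o1.ord.toLE) (@WithBot.instOrderBot _ o1.ord.toLE) _
  | coe a =>
    exact hb a (MvPolynomial.mem_support_iff.1 (@Finset.mem_of_max _ o1.ord _ _ hM))

theorem lppW_lt_of (o1 : MonOrd n) {h : MvPolynomial (Fin n) K} {μ : PP n}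
    (hb : ∀ γ : PP n, MvPolynomial.coeff γ h ≠ 0 → o1.ord.lt γ μ) :
    wbltP o1 (lppW o1 h) (μ : WithBot (PP n)) := by
  cases hM : lppW o1 h with
  | bot => exact @WithBot.bot_lt_coe _ o1.ord.toLT μ
  | coe a =>
    exact (@WithBot.coe_lt_coe _ _ _ o1.ord.toLT).2
      (hb a (MvPolynomial.mem_support_iff.1 (@Finset.mem_of_max _ o1.ord _ _ hM)))

theorem le_lpp_of_coeff (o1 : MonOrd n) {h : MvPolynomial (Fin n) K} (hne : h ≠ 0)
    {γ : PP n} (hc : MvPolynomial.coeff γ h ≠ 0) : o1.ord.le γ (lpp o1 h) := by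
  have := le_lppW o1 (K := K) hc
  rw [(lppW_eq_of_ne o1 hne).1] at this
  exact (@WithBot.coe_le_coe _ _ _ o1.ord.toLE).1 this

theorem ord_le_add_left (o1 : MonOrd n) (t : PP n) {a b : PP n} (h : o1.ord.le a b) :
    o1.ord.le (t + a) (t + b) := by
  rcases (@le_iff_lt_or_eq _ o1.ord.toPartialOrder _ _).1 h with h' | h'
  · exact @le_of_lt _ o1.ord.toPreorder _ _ (o1.mul_lt t a b h')
  · rw [h']; exact @le_refl _ o1.ord.toPreorder _

theorem wbM_antisymmP (o1 : MonOrd n) {a b : WithBot (PP n)}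
    (h1 : wbleP o1 a b) (h2 : wbleP o1 b a) : a = b :=
  @le_antisymm _ (@WithBot.instPartialOrder _ o1.ord.toPartialOrder) _ _ h1 h2

/-- Leading power product of `monomial t d * g`. -/
theorem lpp_monomial_mul (o1 : MonOrd n) {d : K} (hd : d ≠ 0)
    {g : MvPolynomial (Fin n) K} (hg : g ≠ 0) (t : PP n) :
    lppW o1 (MvPolynomial.monomial t d * g) = ((t + lpp o1 g : PP n) : WithBot (PP n)) ∧
      MvPolynomial.coeff (t + lpp o1 g) (MvPolynomial.monomial t d * g) =
        d * MvPolynomial.coeff (lpp o1 g) g := by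
  have hcoeff : MvPolynomial.coeff (t + lpp o1 g) (MvPolynomial.monomial t d * g) =
      d * MvPolynomial.coeff (lpp o1 g) g := MvPolynomial.coeff_monomial_mul _ _ _ _
  refine ⟨?_, hcoeff⟩
  have hclat : MvPolynomial.coeff (t + lpp o1 g) (MvPolynomial.monomial t d * g) ≠ 0 := by
    rw [hcoeff]; exact mul_ne_zero hd (lppW_eq_of_ne o1 hg).2
  refine wbM_antisymmP o1 ?_ (le_lppW o1 hclat)
  refine lppW_le_of o1 fun γ hγ => ?_
  rw [MvPolynomial.coeff_monomial_mul'] at hγ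
  by_cases hle : t ≤ γ
  · have h2 : MvPolynomial.coeff (γ - t) g ≠ 0 := by
      intro h0; rw [if_pos hle, h0] at hγ; simp at hγ
    have h3 : o1.ord.le (γ - t) (lpp o1 g) := le_lpp_of_coeff o1 hg h2
    have h4 : o1.ord.le (t + (γ - t)) (t + lpp o1 g) := ord_le_add_left o1 t h3
    have h5 : t + (γ - t) = γ := by rw [add_comm]; exact tsub_add_cancel_of_le hle
    rw [h5] at h4
    exact (@WithBot.coe_le_coe _ _ _ o1.ord.toLE).2 h4
  · simp [hle] at hγ


theorem lppW_sub_lt (o1 : MonOrd n) {h q : MvPolynomial (Fin n) K} (hne : h ≠ 0)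
    (hq : lppW o1 q = ((lpp o1 h : PP n) : WithBot (PP n)))
    (hc : MvPolynomial.coeff (lpp o1 h) q = MvPolynomial.coeff (lpp o1 h) h) :
    wbltP o1 (lppW o1 (h - q)) ((lpp o1 h : PP n) : WithBot (PP n)) := by
  refine lppW_lt_of o1 fun γ hγ => ?_
  rw [MvPolynomial.coeff_sub] at hγ
  have hγne : γ ≠ lpp o1 h := by
    rintro rfl; rw [hc] at hγ; simp at hγ
  have hle : o1.ord.le γ (lpp o1 h) := by
    by_cases h1 : MvPolynomial.coeff γ h ≠ 0
    · exact le_lpp_of_coeff o1 hne h1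
    · push_neg at h1
      have h2 : MvPolynomial.coeff γ q ≠ 0 := by
        intro h0; rw [h1, h0] at hγ; simp at hγ
      have := le_lppW o1 (K := K) h2
      rw [hq] at this
      exact (@WithBot.coe_le_coe _ _ _ o1.ord.toLE).1 this
  exact @lt_of_le_of_ne _ o1.ord.toPartialOrder _ _ hle hγne

theorem wfP (o1 : MonOrd n) : WellFounded (wbltP o1) :=
  (@WithBot.instWellFoundedLT (PP n) o1.ord.toLT ⟨o1.wf⟩).wf

theorem mcoeff_monomial_pmul (t : PP n) (d : K) (u : ModElem K n m) (b : MTerm n m) :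
    mcoeff (fun k => MvPolynomial.monomial t d * u k) b = d * mcoeff (smulPP t u) b := by
  have h1 : MvPolynomial.monomial t d * u b.2 =
      MvPolynomial.C d * (MvPolynomial.monomial t (1 : K) * u b.2) := by
    rw [← mul_assoc, MvPolynomial.C_mul_monomial, mul_one]
  unfold mcoeff smulPP
  show MvPolynomial.coeff b.1 (MvPolynomial.monomial t d * u b.2) =
    d * MvPolynomial.coeff b.1 (MvPolynomial.monomial t (1 : K) * u b.2)
  rw [h1, MvPolynomial.coeff_C_mul]

/-- Main reduction lemma (Statement 1 machinery). -/
theorem main_reduction (o1 : MonOrd n) (o2 : ModOrd n m)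
    (F : Fin m → MvPolynomial (Fin n) K) {s : ℕ}
    (g : Fin s → MvPolynomial (Fin n) K) (v : Fin s → ModElem K n m)
    (hG : IsFullLGB o1 o2 F g v) (T : MTerm n m) :
    ∀ (h : MvPolynomial (Fin n) K) (w : ModElem K n m), h = dotF w F →
      wbltM o2 (lppMW o2 w) (T : WithBot (MTerm n m)) →
      ∃ p : Fin s → MvPolynomial (Fin n) K,
        (∀ i, p i ≠ 0 → wbltM o2 (lppMW o2 (v i)) (T : WithBot (MTerm n m))) ∧
        h = ∑ i, p i * g i ∧
        (∀ i, wbltM o2 (lppMW o2 (pmul (p i) (v i))) (T : WithBot (MTerm n m))) := by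
  suffices key : ∀ d : WithBot (PP n), ∀ (h : MvPolynomial (Fin n) K) (w : ModElem K n m),
      lppW o1 h = d → h = dotF w F →
      wbltM o2 (lppMW o2 w) (T : WithBot (MTerm n m)) →
      ∃ p : Fin s → MvPolynomial (Fin n) K,
        (∀ i, p i ≠ 0 → wbltM o2 (lppMW o2 (v i)) (T : WithBot (MTerm n m))) ∧
        h = ∑ i, p i * g i ∧
        (∀ i, wbltM o2 (lppMW o2 (pmul (p i) (v i))) (T : WithBot (MTerm n m))) by
    intro h w h1 h2; exact key _ h w rfl h1 h2
  intro d
  induction d using (wfP o1).induction with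
  | _ d IH =>
  intro h w hd hw hsigw
  by_cases hne : h = 0
  · refine ⟨fun _ => 0, fun i hi => absurd rfl hi, by simp [hne], fun i => ?_⟩
    refine lppMW_lt_of o2 fun b hb => ?_
    simp [mcoeff, pmul] at hb
  · obtain ⟨i, hgne, hdvd, hsig⟩ := hG.2 h w hw hne
    have hVi : wbltM o2 (lppMW o2 (smulPP (lpp o1 h - lpp o1 (g i)) (v i)))
        (T : WithBot (MTerm n m)) := wbltM_of_le_of_lt o2 hsig hsigw
    set t : PP n := lpp o1 h - lpp o1 (g i) with htdef
    have ht : t + lpp o1 (g i) = lpp o1 h := tsub_add_cancel_of_le hdvd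
    have hlch : lc o1 h ≠ 0 := (lppW_eq_of_ne o1 hne).2
    have hlcg : lc o1 (g i) ≠ 0 := (lppW_eq_of_ne o1 hgne).2
    have hdne : lc o1 h / lc o1 (g i) ≠ 0 := div_ne_zero hlch hlcg
    set d' : K := lc o1 h / lc o1 (g i) with hd'def
    obtain ⟨hq1, hq2⟩ := lpp_monomial_mul o1 hdne hgne t
    rw [ht] at hq1 hq2
    have hq2' : MvPolynomial.coeff (lpp o1 h) (MvPolynomial.monomial t d' * g i) =
        MvPolynomial.coeff (lpp o1 h) h := by
      rw [hq2, hd'def]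
      unfold lc
      exact div_mul_cancel₀ _ hlcg
    have hlt' : wbltP o1 (lppW o1 (h - MvPolynomial.monomial t d' * g i))
        ((lpp o1 h : PP n) : WithBot (PP n)) := lppW_sub_lt o1 hne hq1 hq2'
    have hdlt : wbltP o1 (lppW o1 (h - MvPolynomial.monomial t d' * g i)) d := by
      rw [← hd, (lppW_eq_of_ne o1 hne).1]; exact hlt'
    -- new labeled representation
    set w' : ModElem K n m := fun k => w k - MvPolynomial.monomial t d' * v i k with hw'def
    have hmono : ∀ b : MTerm n m,
        mcoeff (fun k => MvPolynomial.monomial t d' * v i k) b ≠ 0 → o2.ord.lt b T := by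
      intro b hb
      rw [mcoeff_monomial_pmul] at hb
      have h2 : mcoeff (smulPP t (v i)) b ≠ 0 := fun h0 => hb (by rw [h0, mul_zero])
      exact lt_T_of_mcoeff o2 h2 hVi
    have hsigw' : wbltM o2 (lppMW o2 w') (T : WithBot (MTerm n m)) := by
      refine lppMW_lt_of o2 fun b hb => ?_
      have hb' : mcoeff w b - mcoeff (fun k => MvPolynomial.monomial t d' * v i k) b ≠ 0 := by
        simpa [mcoeff, hw'def, MvPolynomial.coeff_sub] using hb
      by_cases h1 : mcoeff w b ≠ 0
      · exact lt_T_of_mcoeff o2 h1 hsigw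
      · push_neg at h1
        refine hmono b fun h0 => ?_
        rw [h1, h0] at hb'; simp at hb'
    have hww' : h - MvPolynomial.monomial t d' * g i = dotF w' F := by
      have h1 : dotF w' F = dotF w F - MvPolynomial.monomial t d' * dotF (v i) F := by
        unfold dotF
        rw [Finset.mul_sum, ← Finset.sum_sub_distrib]
        exact Finset.sum_congr rfl fun k _ => by rw [hw'def]; ring
      rw [h1, ← hw, hG.1 i]
    obtain ⟨p', hp'1, hp'2, hp'3⟩ := IH _ hdlt _ w' rfl hww' hsigw'
    refine ⟨fun i' => p' i' + if i' = i then MvPolynomial.monomial t d' else 0, ?_, ?_, ?_⟩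
    · intro i' hpn
      by_cases hii : i' = i
      · subst hii
        exact wbltM_of_le_of_lt o2 (lppMW_le_smulPP o2 t (v i')) hVi
      · refine hp'1 i' fun h0 => hpn ?_
        simp [hii, h0]
    · have hsum : ∑ i', (p' i' + if i' = i then MvPolynomial.monomial t d' else 0) * g i'
          = (∑ i', p' i' * g i') + MvPolynomial.monomial t d' * g i := by
        simp only [add_mul, ite_mul, zero_mul, Finset.sum_add_distrib]
        simp
      show h = ∑ i', (p' i' + if i' = i then MvPolynomial.monomial t d' else 0) * g i'
      rw [hsum, ← hp'2]
      ring
    · intro i'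
      by_cases hii : i' = i
      · subst hii
        refine lppMW_lt_of o2 fun b hb => ?_
        have hb' : mcoeff (pmul (p' i') (v i')) b +
            mcoeff (fun k => MvPolynomial.monomial t d' * v i' k) b ≠ 0 := by
          simpa [mcoeff, pmul, add_mul, MvPolynomial.coeff_add] using hb
        by_cases h1 : mcoeff (pmul (p' i') (v i')) b ≠ 0
        · exact lt_T_of_mcoeff o2 h1 (hp'3 i')
        · push_neg at h1
          refine hmono b fun h0 => ?_
          rw [h1, h0] at hb'; simp at hb'
      · simpa [pmul, hii] using hp'3 i'

theorem wbleM_refl (o2 : ModOrd n m) (a : WithBot (MTerm n m)) : wbleM o2 a a :=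
  @le_refl _ (@WithBot.instPreorder _ o2.ord.toPreorder) a

theorem mcoeff_termVec (α : PP n) (c : K) (j : Fin m) (b : MTerm n m) :
    mcoeff (termVec α c j) b = if b = (α, j) then c else 0 := by
  unfold mcoeff termVec
  rcases b with ⟨β, k⟩
  by_cases hk : k = j
  · subst hk
    simp only [if_pos rfl, MvPolynomial.coeff_monomial, Prod.mk.injEq, and_true]
    by_cases hβ : β = α
    · simp [hβ]
    · simp [hβ, Ne.symm hβ]
  · simp [hk, Prod.ext_iff]

theorem dotF_termVec (α : PP n) (c : K) (j : Fin m) (F : Fin m → MvPolynomial (Fin n) K) :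
    dotF (termVec α c j) F = MvPolynomial.monomial α c * F j := by
  unfold dotF termVec
  rw [Finset.sum_eq_single j]
  · simp
  · intro k _ hk; simp [hk]
  · simp

theorem mcoeff_sumvi {s : ℕ} (p : Fin s → MvPolynomial (Fin n) K)
    (v : Fin s → ModElem K n m) (b : MTerm n m) :
    mcoeff (fun k => ∑ i, p i * v i k) b = ∑ i, mcoeff (pmul (p i) (v i)) b := by
  unfold mcoeff pmul
  exact MvPolynomial.coeff_sum _ _ _

theorem dotF_sumvi {s : ℕ} (p : Fin s → MvPolynomial (Fin n) K)
    (v : Fin s → ModElem K n m) (F : Fin m → MvPolynomial (Fin n) K) :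
    dotF (fun k => ∑ i, p i * v i k) F = ∑ i, p i * dotF (v i) F := by
  unfold dotF
  show ∑ k, (∑ i, p i * v i k) * F k = _
  simp only [Finset.sum_mul, Finset.mul_sum, mul_assoc]
  exact Finset.sum_comm

end DetachAux
/-- Corollary: the representation of Statement 1 can be achieved using only
the elements of `G` whose signatures are `≺ x^α e_j` (encoded by requiring the coefficient `pᵢ`
to vanish unless `lpp(vᵢ) ≺ x^α e_j`). -/
theorem detachability_stmt2 {K : Type*} [Field K] {n m : ℕ}
    (o1 : MonOrd n) (o2 : ModOrd n m) (F : Fin m → MvPolynomial (Fin n) K)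
    {s : ℕ} (g : Fin s → MvPolynomial (Fin n) K) (v : Fin s → ModElem K n m)
    (hG : IsFullLGB o1 o2 F g v)
    (c : K) (hc : c ≠ 0) (α : PP n) (j : Fin m)
    (f : MvPolynomial (Fin n) K) (u : ModElem K n m)
    (hfu : f = dotF u F)
    (hlppu : lppMW o2 u = (((α, j) : MTerm n m) : WithBot (MTerm n m)))
    (hlcu : mcoeff u (α, j) = c) :
    (∃ p : Fin s → MvPolynomial (Fin n) K,
      (∀ i, p i ≠ 0 →
        wbltM o2 (lppMW o2 (v i)) (((α, j) : MTerm n m) : WithBot (MTerm n m))) ∧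
      f = monomial α c * F j + ∑ i, p i * g i ∧
      ∀ i, wbltM o2 (lppMW o2 (pmul (p i) (v i)))
        (((α, j) : MTerm n m) : WithBot (MTerm n m))) ∧
    (∀ p : Fin s → MvPolynomial (Fin n) K,
      (∀ i, p i ≠ 0 →
        wbltM o2 (lppMW o2 (v i)) (((α, j) : MTerm n m) : WithBot (MTerm n m))) →
      f = monomial α c * F j + ∑ i, p i * g i →
      (∀ i, wbltM o2 (lppMW o2 (pmul (p i) (v i)))
        (((α, j) : MTerm n m) : WithBot (MTerm n m))) →
      (f = dotF (fun k => termVec α c j k + ∑ i, p i * v i k) F ∧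
       lppMW o2 (fun k => termVec α c j k + ∑ i, p i * v i k) =
         (((α, j) : MTerm n m) : WithBot (MTerm n m)) ∧
       mcoeff (fun k => termVec α c j k + ∑ i, p i * v i k) (α, j) = c)) := by
  have hT : lppMW o2 u = (((α, j) : MTerm n m) : WithBot (MTerm n m)) := hlppu
  constructor
  · -- existence, via the main reduction lemma
    have hw0 : f - MvPolynomial.monomial α c * F j =
        dotF (fun k => u k - termVec α c j k) F := by
      have h1 : dotF (fun k => u k - termVec α c j k) F =
          dotF u F - dotF (termVec α c j) F := by
        unfold dotF
        rw [← Finset.sum_sub_distrib]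
        exact Finset.sum_congr rfl fun k _ => by ring
      rw [h1, ← hfu, dotF_termVec]
    have hsig0 : wbltM o2 (lppMW o2 (fun k => u k - termVec α c j k))
        (((α, j) : MTerm n m) : WithBot (MTerm n m)) := by
      refine lppMW_lt_of o2 fun b hb => ?_
      have hb' : mcoeff u b - mcoeff (termVec α c j) b ≠ 0 := by
        simpa [mcoeff, MvPolynomial.coeff_sub] using hb
      rw [mcoeff_termVec] at hb'
      by_cases hbT : b = (α, j)
      · rw [if_pos hbT, hbT, hlcu] at hb'; simp at hb'
      · rw [if_neg hbT, sub_zero] at hb'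
        exact @lt_of_le_of_ne _ o2.ord.toPartialOrder _ _
          (le_T_of_mcoeff o2 hb' (by rw [hT]; exact wbleM_refl o2 _)) hbT
    obtain ⟨p, h1, h2, h3⟩ :=
      main_reduction o1 o2 F g v hG ((α, j) : MTerm n m) _ _ hw0 hsig0
    exact ⟨p, h1, by rw [← h2]; ring, h3⟩
  · -- any such representation yields a valid label
    intro p hp1 hp2 hp3
    have hsum0 : ∀ b : MTerm n m, mcoeff (fun k => ∑ i, p i * v i k) b ≠ 0 →
        o2.ord.lt b ((α, j) : MTerm n m) := by
      intro b hb
      rw [mcoeff_sumvi] at hb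
      obtain ⟨i, _, hi⟩ := Finset.exists_ne_zero_of_sum_ne_zero hb
      exact lt_T_of_mcoeff o2 hi (hp3 i)
    have hcoeffT : mcoeff (fun k => termVec α c j k + ∑ i, p i * v i k) ((α, j) : MTerm n m)
        = c := by
      have h1 : mcoeff (fun k => ∑ i, p i * v i k) ((α, j) : MTerm n m) = 0 := by
        rw [mcoeff_sumvi]
        exact Finset.sum_eq_zero fun i _ => mcoeff_eq_zero_of_lt o2 (hp3 i)
      have h2 : mcoeff (fun k => termVec α c j k + ∑ i, p i * v i k) ((α, j) : MTerm n m)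
          = mcoeff (termVec α c j) ((α, j) : MTerm n m)
            + mcoeff (fun k => ∑ i, p i * v i k) ((α, j) : MTerm n m) := by
        simp [mcoeff, MvPolynomial.coeff_add]
      rw [h2, h1, mcoeff_termVec, if_pos rfl, add_zero]
    refine ⟨?_, ?_, hcoeffT⟩
    · -- f = dotF u' F
      have h1 : dotF (fun k => termVec α c j k + ∑ i, p i * v i k) F =
          dotF (termVec α c j) F + dotF (fun k => ∑ i, p i * v i k) F := by
        unfold dotF
        rw [← Finset.sum_add_distrib]
        exact Finset.sum_congr rfl fun k _ => by ring
      rw [h1, dotF_termVec, dotF_sumvi, hp2]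
      congr 1
      exact Finset.sum_congr rfl fun i _ => by rw [← hG.1 i]
    · -- lppMW u' = (α, j)
      refine wbM_antisymm o2 ?_ ?_
      · refine lppMW_le_of o2 fun b hb => ?_
        have hb' : mcoeff (termVec α c j) b + mcoeff (fun k => ∑ i, p i * v i k) b ≠ 0 := by
          simpa [mcoeff, MvPolynomial.coeff_add] using hb
        by_cases hbT : b = (α, j)
        · rw [hbT]; exact wbleM_refl o2 _
        · have h1 : mcoeff (termVec α c j) b = 0 := by rw [mcoeff_termVec, if_neg hbT]
          rw [h1, zero_add] at hb'
          exact (@WithBot.coe_le_coe _ _ _ o2.ord.toLE).2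
            (@le_of_lt _ o2.ord.toPreorder _ _ (hsum0 b hb'))
      · exact le_lppMW o2 (by rw [hcoeffT]; exact hc)
end

section
/- Let x^α e_j be a module term and let g^[v] and g'^[v'] be two standard forms of x^α e_j in I. Then lpp(g) = lpp(g') and lm(g)/lc(v) = lm(g')/lc(v'); in particular g = 0 if and only if g' = 0, and if both are nonzero then lc(g)·lc(v') = lc(g')·lc(v). -/
open MvPolynomial

section Helpers
variable {K : Type*} [Field K] {n m : ℕ}

lemma lppW_eq_bot_iff (o1 : MonOrd n) (g : MvPolynomial (Fin n) K) :
    lppW o1 g = ⊥ ↔ g = 0 := by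
  letI := o1.ord
  rw [lppW, Finset.max_eq_bot, MvPolynomial.support_eq_empty]

lemma lppW_eq_coe (o1 : MonOrd n) {g : MvPolynomial (Fin n) K} (hg : g ≠ 0) :
    lppW o1 g = ((lpp o1 g : PP n) : WithBot (PP n)) := by
  have h : lppW o1 g ≠ ⊥ := fun h => hg ((lppW_eq_bot_iff o1 g).mp h)
  obtain ⟨a, ha⟩ := Option.ne_none_iff_exists.mp h
  rw [lpp, ← ha]
  rfl

lemma le_lppW_of_mem (o1 : MonOrd n) {g : MvPolynomial (Fin n) K} {α : PP n}
    (h : α ∈ g.support) : wbleP o1 (α : WithBot (PP n)) (lppW o1 g) :=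
  @Finset.le_max _ o1.ord _ _ h

lemma lppW_le (o1 : MonOrd n) {g : MvPolynomial (Fin n) K} {b : WithBot (PP n)}
    (h : ∀ α ∈ g.support, wbleP o1 (α : WithBot (PP n)) b) : wbleP o1 (lppW o1 g) b :=
  @Finset.max_le _ o1.ord _ _ h

lemma wbleP_antisymm (o1 : MonOrd n) {a b : WithBot (PP n)}
    (h : wbleP o1 a b) (h' : wbleP o1 b a) : a = b :=
  @le_antisymm _ (@WithBot.instPartialOrder _ o1.ord.toPartialOrder) _ _ h h'

lemma mem_msupport_iff (u : ModElem K n m) (t : MTerm n m) :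
    t ∈ msupport u ↔ mcoeff u t ≠ 0 := by
  obtain ⟨α, j⟩ := t
  simp only [msupport, mcoeff, Finset.mem_biUnion, Finset.mem_image,
    Finset.mem_univ, true_and, MvPolynomial.mem_support_iff, Prod.mk.injEq]
  constructor
  · rintro ⟨i, a, ha, rfl, rfl⟩; exact ha
  · intro h; exact ⟨j, α, h, rfl, rfl⟩

lemma le_lppMW_of_mem (o2 : ModOrd n m) {u : ModElem K n m} {t : MTerm n m}
    (h : t ∈ msupport u) : wbleM o2 (t : WithBot (MTerm n m)) (lppMW o2 u) :=
  @Finset.le_max _ o2.ord _ _ h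

lemma lppMW_le (o2 : ModOrd n m) {u : ModElem K n m} {b : WithBot (MTerm n m)}
    (h : ∀ t ∈ msupport u, wbleM o2 (t : WithBot (MTerm n m)) b) :
    wbleM o2 (lppMW o2 u) b :=
  @Finset.max_le _ o2.ord _ _ h

lemma wbleM_antisymm (o2 : ModOrd n m) {a b : WithBot (MTerm n m)}
    (h : wbleM o2 a b) (h' : wbleM o2 b a) : a = b :=
  @le_antisymm _ (@WithBot.instPartialOrder _ o2.ord.toPartialOrder) _ _ h h'
end Helpers

/-- Two standard forms `g^[v]`, `g'^[v']` of the same module term `T` have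
the same leading power product (in particular `g = 0 ↔ g' = 0`), and if both are nonzero then
`lc(g)·lc(v') = lc(g')·lc(v)` (i.e. `lm(g)/lc(v) = lm(g')/lc(v')`). -/
theorem detachability_stmt3 {K : Type*} [Field K] {n m : ℕ}
    (o1 : MonOrd n) (o2 : ModOrd n m) (F : Fin m → MvPolynomial (Fin n) K)
    (T : MTerm n m) (g g' : MvPolynomial (Fin n) K) (v v' : ModElem K n m)
    (h1 : IsStdForm o1 o2 F T g v) (h2 : IsStdForm o1 o2 F T g' v') :
    lppW o1 g = lppW o1 g' ∧ (g = 0 ↔ g' = 0) ∧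
    (g ≠ 0 → g' ≠ 0 → lc o1 g * lcM o2 v' = lc o1 g' * lcM o2 v) := by
  obtain ⟨hgF, hv, hmin⟩ := h1
  obtain ⟨hgF', hv', hmin'⟩ := h2
  have heq : lppW o1 g = lppW o1 g' :=
    wbleP_antisymm o1 (hmin g' v' hgF' hv') (hmin' g v hgF hv)
  refine ⟨heq, ?_, ?_⟩
  · rw [← lppW_eq_bot_iff o1 g, ← lppW_eq_bot_iff o1 g', heq]
  · intro hg hg'
    have hLg : lppW o1 g = ((lpp o1 g : PP n) : WithBot (PP n)) := lppW_eq_coe o1 hg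
    have hLg' : lppW o1 g' = ((lpp o1 g' : PP n) : WithBot (PP n)) := lppW_eq_coe o1 hg'
    set L := lpp o1 g with hLdef
    have hLL : lpp o1 g' = L := by
      have h := heq
      rw [hLg, hLg'] at h
      exact (WithBot.coe_inj.mp h).symm
    have hcg : g.coeff L = lc o1 g := rfl
    have hcg' : g'.coeff L = lc o1 g' := by rw [lc, hLL]
    have hlcv : lcM o2 v = mcoeff v T := by simp [lcM, hv]
    have hlcv' : lcM o2 v' = mcoeff v' T := by simp [lcM, hv']
    by_contra hne
    set a := lc o1 g' with ha
    set b := lc o1 g with hb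
    set u : ModElem K n m := fun k => C a * v k - C b * v' k with hu
    set f : MvPolynomial (Fin n) K := C a * g - C b * g' with hfdef
    have hf : f = dotF u F := by
      simp only [hfdef, hu, dotF, hgF, hgF', Finset.mul_sum, sub_mul, mul_assoc,
        Finset.sum_sub_distrib]
    have hmcoeff : ∀ t : MTerm n m, mcoeff u t = a * mcoeff v t - b * mcoeff v' t := by
      intro t; simp [hu, mcoeff]
    have hsigmem : T ∈ msupport u := by
      rw [mem_msupport_iff, hmcoeff, ← hlcv, ← hlcv']
      exact sub_ne_zero.mpr fun h => hne h.symm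
    have hsigle : ∀ t ∈ msupport u, wbleM o2 (t : WithBot (MTerm n m)) (T : WithBot (MTerm n m)) := by
      intro t ht
      rw [mem_msupport_iff, hmcoeff] at ht
      have hor : mcoeff v t ≠ 0 ∨ mcoeff v' t ≠ 0 := by
        by_contra h
        push_neg at h
        rw [h.1, h.2] at ht; simp at ht
      rcases hor with h | h
      · have := le_lppMW_of_mem o2 ((mem_msupport_iff v t).mpr h)
        rwa [hv] at this
      · have := le_lppMW_of_mem o2 ((mem_msupport_iff v' t).mpr h)
        rwa [hv'] at this
    have husig : lppMW o2 u = (T : WithBot (MTerm n m)) :=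
      wbleM_antisymm o2 (lppMW_le o2 hsigle) (le_lppMW_of_mem o2 hsigmem)
    have hmono : wbleP o1 (lppW o1 g) (lppW o1 f) := hmin f u hf husig
    have hcoefff : ∀ α : PP n, f.coeff α = a * g.coeff α - b * g'.coeff α := by
      intro α; simp [hfdef]
    have hfL : f.coeff L = 0 := by
      rw [hcoefff, hcg, hcg']; ring
    have hfle : wbleP o1 (lppW o1 f) ((L : PP n) : WithBot (PP n)) := by
      apply lppW_le
      intro α hα
      rw [MvPolynomial.mem_support_iff, hcoefff] at hα
      have hor : g.coeff α ≠ 0 ∨ g'.coeff α ≠ 0 := by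
        by_contra h
        push_neg at h
        rw [h.1, h.2] at hα; simp at hα
      rcases hor with h | h
      · have := le_lppW_of_mem o1 (MvPolynomial.mem_support_iff.mpr h)
        rwa [hLg] at this
      · have := le_lppW_of_mem o1 (MvPolynomial.mem_support_iff.mpr h)
        rwa [hLg', hLL] at this
    have hfeq : lppW o1 f = ((L : PP n) : WithBot (PP n)) := by
      rw [hLg] at hmono
      exact wbleP_antisymm o1 hfle hmono
    have : L ∈ f.support := @Finset.mem_of_max _ o1.ord _ _ hfeq
    rw [MvPolynomial.mem_support_iff] at this
    exact this hfL
end
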